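/- arXiv:1504.04442 — 2 statements merged into one kernel-verified Lean document; each statement's English description precedes it below -/
import Mathlib

section
/- If |q| = 1 and q ∈ ℂ \ {±1}, then the Hermitian conjugate (conjugate transpose) of the Drinfeld–Jimbo R-matrix equals P R⁻¹ P, where P is the permutation matrix on ℂ^n ⊗ ℂ^n. -/
/-!
Write `R = P D + L` with `D` diagonal (`q` on the vectors `eᵢ ⊗ eᵢ`, `1` elsewhere) and
`L = (q - q⁻¹) · (projection onto the span of eᵢ ⊗ eⱼ, i < j)`. Conjugating a diagonal matrix
by `P` swaps the two tensor factors of its index, so `P R(q⁻¹) P = D(q⁻¹) P - P L P`, and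
expanding `R · P R(q⁻¹) P` the cross terms `L P` and `P D (P L P) = P (P L P)` cancel and
`L (P L P) = 0`, leaving `P D D(q⁻¹) P = 1`. Hence `R⁻¹ = P R(q⁻¹) P`. On the other hand
`Rᴴ = R(q̄)` entrywise, and `q̄ = q⁻¹` on the unit circle.
-/

open Matrix

/-- The standard Drinfeld–Jimbo R-matrix as an `n² × n²` complex matrix. -/
noncomputable def DJ (n : ℕ) (q : ℂ) : Matrix (Fin n × Fin n) (Fin n × Fin n) ℂ :=
  fun p r => (if p.1 = r.2 ∧ p.2 = r.1 then (if p.1 = p.2 then q else 1) else 0)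
    + (if p = r ∧ p.1 < p.2 then q - q⁻¹ else 0)

/-- The flip (permutation) operator `P` on `ℂ^n ⊗ ℂ^n`. -/
def flipMat (n : ℕ) : Matrix (Fin n × Fin n) (Fin n × Fin n) ℂ :=
  fun p r => if p.1 = r.2 ∧ p.2 = r.1 then 1 else 0

section

variable {n : ℕ}

theorem flipMat_eq_toMatrix : flipMat n = (Equiv.prodComm (Fin n) (Fin n)).toPEquiv.toMatrix := by
  ext p r
  simp [flipMat, PEquiv.toMatrix_apply, Prod.ext_iff, eq_comm, and_comm]

theorem flipMat_mul (A : Matrix (Fin n × Fin n) (Fin n × Fin n) ℂ) :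
    flipMat n * A = A.submatrix Prod.swap id := by
  rw [flipMat_eq_toMatrix, PEquiv.toMatrix_toPEquiv_mul]; rfl

theorem mul_flipMat (A : Matrix (Fin n × Fin n) (Fin n × Fin n) ℂ) :
    A * flipMat n = A.submatrix id Prod.swap := by
  rw [flipMat_eq_toMatrix, PEquiv.mul_toMatrix_toPEquiv]; rfl

theorem flipMat_mul_flipMat : flipMat n * flipMat n = 1 := by
  rw [flipMat_mul, flipMat_eq_toMatrix]
  ext p r
  simp [PEquiv.toMatrix_apply, one_apply]

theorem flipMat_mul_diagonal_mul_flipMat (d : Fin n × Fin n → ℂ) :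
    flipMat n * diagonal d * flipMat n = diagonal fun p => d p.swap := by
  rw [flipMat_mul, mul_flipMat, submatrix_submatrix]
  exact submatrix_diagonal_equiv d (Equiv.prodComm _ _)

def diagWeight (q : ℂ) : Fin n × Fin n → ℂ := fun p => if p.1 = p.2 then q else 1

noncomputable def upperWeight (q : ℂ) : Fin n × Fin n → ℂ :=
  fun p => if p.1 < p.2 then q - q⁻¹ else 0

theorem DJ_eq_flipMat_mul_diagonal_add_diagonal (q : ℂ) :
    DJ n q = flipMat n * diagonal (diagWeight q) + diagonal (upperWeight q) := by
  ext p r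
  simp only [DJ, flipMat_mul, Matrix.add_apply, submatrix_apply, diagonal_apply, diagWeight,
    upperWeight, id, Prod.swap, Prod.ext_iff]
  grind

theorem conjTranspose_DJ (q : ℂ) : (DJ n q)ᴴ = DJ n (star q) := by
  ext p r
  simp only [DJ, conjTranspose_apply, star_add, apply_ite star, star_zero, star_one, star_sub,
    star_inv₀]
  grind

theorem diagWeight_mul_diagWeight_inv {q : ℂ} (hq : q ≠ 0) (p : Fin n × Fin n) :
    diagWeight q p * diagWeight q⁻¹ p = 1 := by
  unfold diagWeight; split_ifs <;> simp [hq]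

theorem diagonal_upperWeight_inv (q : ℂ) :
    diagonal (upperWeight (n := n) q⁻¹) = -diagonal (upperWeight q) := by
  rw [diagonal_neg]; congr; ext p; unfold upperWeight; split_ifs <;> simp

theorem diagWeight_mul_upperWeight_swap (q r : ℂ) (p : Fin n × Fin n) :
    diagWeight q p * upperWeight r p.swap = upperWeight r p.swap := by
  unfold diagWeight upperWeight; split_ifs <;> simp_all

theorem upperWeight_mul_diagWeight (q r : ℂ) (p : Fin n × Fin n) :
    upperWeight q p * diagWeight r p = upperWeight q p := by
  unfold diagWeight upperWeight; split_ifs <;> simp_all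

theorem upperWeight_mul_upperWeight_swap (q r : ℂ) (p : Fin n × Fin n) :
    upperWeight q p * upperWeight r p.swap = 0 := by
  unfold upperWeight; split_ifs <;> simp_all; omega

theorem DJ_mul_flipMat_mul_DJ_inv_mul_flipMat {q : ℂ} (hq : q ≠ 0) :
    DJ n q * (flipMat n * DJ n q⁻¹ * flipMat n) = 1 := by
  have hR' : flipMat n * DJ n q⁻¹ * flipMat n
      = diagonal (diagWeight q⁻¹) * flipMat n - diagonal fun p => upperWeight q p.swap := by
    rw [DJ_eq_flipMat_mul_diagonal_add_diagonal, diagonal_upperWeight_inv,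
      ← flipMat_mul_diagonal_mul_flipMat]
    simp only [mul_add, add_mul, mul_neg, neg_mul, ← mul_assoc, flipMat_mul_flipMat, one_mul,
      sub_eq_add_neg]
  have hLP : diagonal (upperWeight q) * flipMat n
      = flipMat n * diagonal (fun p => upperWeight (n := n) q p.swap) := by
    rw [← flipMat_mul_diagonal_mul_flipMat, ← mul_assoc, ← mul_assoc, flipMat_mul_flipMat, one_mul]
  calc DJ n q * (flipMat n * DJ n q⁻¹ * flipMat n)
      = (flipMat n * diagonal (diagWeight q) + diagonal (upperWeight q))
          * (diagonal (diagWeight q⁻¹) * flipMat n - diagonal fun p => upperWeight q p.swap) := by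
        rw [hR', DJ_eq_flipMat_mul_diagonal_add_diagonal]
    _ = flipMat n * diagonal (fun p => diagWeight q p * diagWeight q⁻¹ p) * flipMat n
          - flipMat n * diagonal (fun p => diagWeight q p * upperWeight q p.swap)
          + diagonal (fun p => upperWeight q p * diagWeight q⁻¹ p) * flipMat n
          - diagonal (fun p => upperWeight q p * upperWeight q p.swap) := by
        simp only [← diagonal_mul_diagonal]; noncomm_ring
    _ = 1 := by
        simp only [diagWeight_mul_diagWeight_inv hq, diagWeight_mul_upperWeight_swap,
          upperWeight_mul_diagWeight, upperWeight_mul_upperWeight_swap]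
        rw [← hLP, diagonal_one, diagonal_zero, mul_one, flipMat_mul_flipMat, sub_add_cancel,
          sub_zero]

end

theorem DJ_dagger_general (n : ℕ) (q : ℂ) (hq : ‖q‖ = 1) :
    (DJ n q)ᴴ = flipMat n * (DJ n q)⁻¹ * flipMat n := by
  have hq0 : q ≠ 0 := norm_ne_zero_iff.mp (by simp [hq])
  rw [inv_eq_right_inv (DJ_mul_flipMat_mul_DJ_inv_mul_flipMat hq0), ← mul_assoc, ← mul_assoc,
    flipMat_mul_flipMat, one_mul, mul_assoc, flipMat_mul_flipMat, mul_one, conjTranspose_DJ,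
    Complex.inv_eq_conj hq, Complex.star_def]

/-- If `|q| = 1` and `q ≠ ±1`, the conjugate transpose of the Drinfeld–Jimbo R-matrix
equals `P R⁻¹ P`. -/
theorem DJ_dagger (n : ℕ) (q : ℂ) (hq : ‖q‖ = 1) (h1 : q ≠ 1) (h2 : q ≠ -1) :
    (DJ n q)ᴴ = flipMat n * (DJ n q)⁻¹ * flipMat n :=
  DJ_dagger_general n q hq
end

section
/- Let R be a Hecke-type R-matrix with eigenvalue parameter q such that the q-numbers i_q = (q^i − q^{−i})/(q − q^{−1}) are nonzero for i = 2, …, n. Then the q-antisymmetrizers defined inductively by A^(1) = I and A^(i) = ((i−1)_q / i_q) · A^(i−1) (q^{i−1}/(i−1)_q · I − R_{i−1}) A^(i−1) are idempotent: (A^(i))² = A^(i) for all i ≤ n. -/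
/-- The q-number `i_q = (q^i − q^{−i})/(q − q^{−1})`. -/
noncomputable def qnum (q : ℂ) (i : ℕ) : ℂ := (q ^ i - q⁻¹ ^ i) / (q - q⁻¹)

/-- The q-antisymmetrizers: `Asym q R 1 = 1` and
`Asym q R i = ((i−1)_q / i_q) • Asym q R (i−1) * (q^{i−1}/(i−1)_q • 1 − R (i−1)) * Asym q R (i−1)`.
Here `R k` is the image of the `k`-th braid generator acting on the `k`-th and `(k+1)`-th
tensor factors; extension of `A^{(i−1)}` by the identity on the last factor is implicit. -/
noncomputable def Asym {A : Type*} [Ring A] [Algebra ℂ A] (q : ℂ) (R : ℕ → A) : ℕ → A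
  | 0 => 1
  | 1 => 1
  | (k + 2) =>
      (qnum q (k + 1) / qnum q (k + 2)) •
        (Asym q R (k + 1) *
          ((q ^ (k + 1) / qnum q (k + 1)) • (1 : A) - R (k + 1)) *
          Asym q R (k + 1))

/-!
The antisymmetrizers are shown to be idempotent together with the left absorption
`R j * A⁽ᵐ⁾ = -q⁻¹ • A⁽ᵐ⁾` for `j < m`. For the new generator `s = R m`, absorption into
`A⁽ᵐ⁺¹⁾ = c • A⁽ᵐ⁾ (β - s) A⁽ᵐ⁾` follows by expanding the left factor `A⁽ᵐ⁾` once more in terms of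
`A⁽ᵐ⁻¹⁾` (which commutes with `s`) and `t = R (m - 1)`, and then using the braid relation, the Hecke
relation and `t * A⁽ᵐ⁾ = -q⁻¹ • A⁽ᵐ⁾`. Idempotency is then immediate:
`A⁽ᵐ⁺¹⁾ * A⁽ᵐ⁺¹⁾ = c (β + q⁻¹) • A⁽ᵐ⁺¹⁾`. Both scalar conditions reduce to the recursion
`(m + 1)_q = q ^ m + q⁻¹ m_q`.
-/

section Hecke
variable {K A : Type*} [Field K] [Ring A] [Algebra K A] {q : K}

lemma ne_zero_of_sub_inv_ne_zero (h : q - q⁻¹ ≠ 0) : q ≠ 0 := by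
  rintro rfl; simp at h

lemma mul_self_eq_of_hecke (hq : q ≠ 0) {s : A} (h : (s - q • 1) * (s + q⁻¹ • 1) = 0) :
    s * s = (q - q⁻¹) • s + 1 := by
  rw [← sub_eq_zero, ← h]
  simp only [mul_add, sub_mul, smul_mul_assoc, mul_smul_comm, one_mul, mul_one]
  match_scalars <;> field_simp
  ring

lemma mul_smul_one_sub_self_of_hecke (hq : q ≠ 0) {s : A} (hs : s * s = (q - q⁻¹) • s + 1) :
    s * (q • 1 - s) = (-q⁻¹) • (q • 1 - s) := by
  simp only [mul_sub, mul_smul_comm, mul_one, hs]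
  match_scalars <;> field_simp; ring

lemma mul_braid_word_of_hecke (hq : q ≠ 0) {β γ : K} {s t a : A} (hs : s * s = (q - q⁻¹) • s + 1)
    (hst : s * t * s = t * s * t) (hta : t * a = (-q⁻¹) • a) (hβγ : β * γ + q⁻¹ * β = q * γ) :
    s * ((γ • 1 - t) * (β • 1 - s) * a) = (-q⁻¹) • ((γ • 1 - t) * (β • 1 - s) * a) := by
  have hstsa : s * (t * (s * a)) = (-q⁻¹) • (t * (s * a)) := by
    simp only [← mul_assoc, hst]; rw [mul_assoc, hta, mul_smul_comm, mul_assoc]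
  have hssa : s * (s * a) = (q - q⁻¹) • (s * a) + a := by
    rw [← mul_assoc, hs, add_mul, smul_mul_assoc, one_mul]
  simp only [sub_mul, mul_sub, smul_mul_assoc, mul_smul_comm, one_mul, mul_assoc, hstsa,
    hssa, hta, smul_sub, smul_add, smul_smul]
  match_scalars
  · linear_combination hβγ
  · linear_combination q⁻¹ * hβγ + γ * mul_inv_cancel₀ hq
  · ring

lemma mul_sandwich_of_hecke (hq : q ≠ 0) {β γ c : K} {a a' s t : A}
    (ha : a = c • (a' * (γ • 1 - t) * a')) (ha' : a' * a' = a') (hsa' : Commute s a')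
    (hs : s * s = (q - q⁻¹) • s + 1) (hst : s * t * s = t * s * t) (hta : t * a = (-q⁻¹) • a)
    (hβγ : β * γ + q⁻¹ * β = q * γ) :
    s * (a * (β • 1 - s) * a) = (-q⁻¹) • (a * (β • 1 - s) * a) := by
  have ha'a : a' * a = a := by rw [ha, mul_smul_comm, ← mul_assoc, ← mul_assoc, ha']
  have hfold : a' * ((β • 1 - s) * a) = (β • 1 - s) * a := by
    rw [← mul_assoc, ((Commute.one_right a').smul_right β |>.sub_right hsa'.symm).eq,
      mul_assoc, ha'a]
  calc s * (a * (β • 1 - s) * a)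
      = c • (a' * (s * ((γ • 1 - t) * (β • 1 - s) * a))) := by
        nth_rewrite 1 [ha]
        simp only [smul_mul_assoc, mul_smul_comm, mul_assoc, hfold, ← mul_assoc s a', hsa'.eq]
    _ = (-q⁻¹) • (a * (β • 1 - s) * a) := by
        rw [mul_braid_word_of_hecke hq hs hst hta hβγ]
        nth_rewrite 2 [ha]
        simp only [smul_mul_assoc, mul_smul_comm, mul_assoc, hfold, smul_comm c]

lemma smul_sandwich_mul_self {c β : K} {a b s : A} (hb : b = c • (a * (β • 1 - s) * a))
    (ha : a * a = a) (hsb : s * b = (-q⁻¹) • b) (hc : c * (β + q⁻¹) = 1) : b * b = b := by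
  have hab : a * b = b := by rw [hb, mul_smul_comm, ← mul_assoc, ← mul_assoc, ha]
  calc b * b = c • (a * ((β • 1 - s) * (a * b))) := by
        nth_rewrite 1 [hb]; rw [smul_mul_assoc, mul_assoc, mul_assoc]
    _ = b := by
        rw [hab, sub_mul, hsb, smul_mul_assoc, one_mul, ← sub_smul, mul_smul_comm, hab, smul_smul,
          sub_neg_eq_add, hc, one_smul]

end Hecke

section QNumber
variable {q : ℂ}

lemma qnum_one (hq : q - q⁻¹ ≠ 0) : qnum q 1 = 1 := by
  rw [qnum, pow_one, pow_one, div_self hq]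

lemma qnum_succ (hq : q - q⁻¹ ≠ 0) (m : ℕ) : qnum q (m + 1) = q ^ m + q⁻¹ * qnum q m := by
  rw [qnum, qnum, mul_div_assoc', div_eq_iff hq, add_mul, div_mul_cancel₀ _ hq]
  ring

lemma pow_div_qnum_add_inv (hq : q - q⁻¹ ≠ 0) {m : ℕ} (hm : qnum q m ≠ 0) :
    q ^ m / qnum q m + q⁻¹ = qnum q (m + 1) / qnum q m := by
  rw [qnum_succ hq, eq_div_iff hm, add_mul, div_mul_cancel₀ _ hm, mul_comm]

lemma qnum_div_qnum_succ_mul (hq : q - q⁻¹ ≠ 0) {m : ℕ} (hm : qnum q m ≠ 0)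
    (hm' : qnum q (m + 1) ≠ 0) : qnum q m / qnum q (m + 1) * (q ^ m / qnum q m + q⁻¹) = 1 := by
  rw [pow_div_qnum_add_inv hq hm, div_mul_div_comm, mul_comm, div_self (mul_ne_zero hm' hm)]

lemma pow_div_qnum_succ_mul_add (hq : q - q⁻¹ ≠ 0) {m : ℕ} (hm : qnum q m ≠ 0)
    (hm' : qnum q (m + 1) ≠ 0) :
    q ^ (m + 1) / qnum q (m + 1) * (q ^ m / qnum q m) + q⁻¹ * (q ^ (m + 1) / qnum q (m + 1)) =
      q * (q ^ m / qnum q m) := by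
  rw [mul_comm q⁻¹, ← mul_add, pow_div_qnum_add_inv hq hm]
  field_simp
  ring

end QNumber

section Antisymmetrizer
variable {A : Type*} [Ring A] [Algebra ℂ A] {q : ℂ} {R : ℕ → A}

lemma commute_R_Asym (hfar : ∀ i j : ℕ, 1 ≤ i → i + 2 ≤ j → R i * R j = R j * R i) {k : ℕ} :
    ∀ m, m + 1 ≤ k → Commute (R k) (Asym q R m)
  | 0, _ | 1, _ => Commute.one_right _
  | m + 2, hm => by
    have ih : Commute (R k) (Asym q R (m + 1)) := commute_R_Asym hfar (m + 1) (by omega)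
    have hRk := (hfar (m + 1) k le_add_self (by omega)).symm
    exact ((ih.mul_right (((Commute.one_right _).smul_right _).sub_right hRk)).mul_right
      ih).smul_right _

lemma R_mul_Asym_succ_of_R_mul_Asym {j k : ℕ}
    (h : R j * Asym q R (k + 1) = (-q⁻¹) • Asym q R (k + 1)) :
    R j * Asym q R (k + 2) = (-q⁻¹) • Asym q R (k + 2) := by
  rw [Asym, mul_smul_comm, ← mul_assoc, ← mul_assoc, h, smul_mul_assoc, smul_mul_assoc, smul_comm]

lemma R_one_mul_Asym_two (hq : q - q⁻¹ ≠ 0)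
    (hhecke : (R 1 - q • (1 : A)) * (R 1 + q⁻¹ • (1 : A)) = 0) :
    R 1 * Asym q R 2 = (-q⁻¹) • Asym q R 2 := by
  have hq₀ := ne_zero_of_sub_inv_ne_zero hq
  rw [Asym, Asym, qnum_one hq, pow_one, div_one, one_mul, mul_one, mul_smul_comm,
    mul_smul_one_sub_self_of_hecke hq₀ (mul_self_eq_of_hecke hq₀ hhecke), smul_comm]

lemma R_add_two_mul_Asym_add_three (hq : q - q⁻¹ ≠ 0)
    (hbraid : ∀ i : ℕ, 1 ≤ i → R i * R (i + 1) * R i = R (i + 1) * R i * R (i + 1))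
    (hfar : ∀ i j : ℕ, 1 ≤ i → i + 2 ≤ j → R i * R j = R j * R i)
    (hhecke : ∀ i : ℕ, 1 ≤ i → (R i - q • (1 : A)) * (R i + q⁻¹ • (1 : A)) = 0) {k : ℕ}
    (hk : qnum q (k + 1) ≠ 0) (hk' : qnum q (k + 2) ≠ 0)
    (hidem : Asym q R (k + 1) * Asym q R (k + 1) = Asym q R (k + 1))
    (habs : R (k + 1) * Asym q R (k + 2) = (-q⁻¹) • Asym q R (k + 2)) :
    R (k + 2) * Asym q R (k + 3) = (-q⁻¹) • Asym q R (k + 3) := by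
  have hq₀ := ne_zero_of_sub_inv_ne_zero hq
  rw [Asym, mul_smul_comm, smul_comm,
    mul_sandwich_of_hecke hq₀ (Asym.eq_3 q R k) hidem (commute_R_Asym hfar (k + 1) le_rfl)
      (mul_self_eq_of_hecke hq₀ (hhecke (k + 2) le_add_self)) (hbraid (k + 1) le_add_self).symm
      habs (pow_div_qnum_succ_mul_add hq hk hk')]

lemma Asym_add_two_mul_self (hq : q - q⁻¹ ≠ 0) {k : ℕ} (hk : qnum q (k + 1) ≠ 0)
    (hk' : qnum q (k + 2) ≠ 0) (hidem : Asym q R (k + 1) * Asym q R (k + 1) = Asym q R (k + 1))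
    (htop : R (k + 1) * Asym q R (k + 2) = (-q⁻¹) • Asym q R (k + 2)) :
    Asym q R (k + 2) * Asym q R (k + 2) = Asym q R (k + 2) :=
  smul_sandwich_mul_self (Asym.eq_3 q R k) hidem htop (qnum_div_qnum_succ_mul hq hk hk')

theorem Asym_mul_self_and_R_mul_Asym (hq : q - q⁻¹ ≠ 0)
    (hbraid : ∀ i : ℕ, 1 ≤ i → R i * R (i + 1) * R i = R (i + 1) * R i * R (i + 1))
    (hfar : ∀ i j : ℕ, 1 ≤ i → i + 2 ≤ j → R i * R j = R j * R i)
    (hhecke : ∀ i : ℕ, 1 ≤ i → (R i - q • (1 : A)) * (R i + q⁻¹ • (1 : A)) = 0) :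
    ∀ m : ℕ, (∀ i, 1 ≤ i → i ≤ m → qnum q i ≠ 0) →
      Asym q R m * Asym q R m = Asym q R m ∧
        ∀ j, 1 ≤ j → j < m → R j * Asym q R m = (-q⁻¹) • Asym q R m
  | 0, _ | 1, _ => ⟨one_mul 1, fun j hj hj1 => by omega⟩
  | k + 2, hqnum => by
    obtain ⟨hidem, habs⟩ := Asym_mul_self_and_R_mul_Asym hq hbraid hfar hhecke (k + 1)
      fun i hi hik => hqnum i hi (by omega)
    have htop : R (k + 1) * Asym q R (k + 2) = (-q⁻¹) • Asym q R (k + 2) := by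
      cases k with
      | zero => exact R_one_mul_Asym_two hq (hhecke 1 le_rfl)
      | succ k =>
        exact R_add_two_mul_Asym_add_three hq hbraid hfar hhecke (hqnum _ le_add_self (by omega))
          (hqnum _ le_add_self (by omega))
          (Asym_mul_self_and_R_mul_Asym hq hbraid hfar hhecke (k + 1)
            fun i hi hik => hqnum i hi (by omega)).1 (habs (k + 1) le_add_self (by omega))
    refine ⟨Asym_add_two_mul_self hq (hqnum _ le_add_self (by omega))
      (hqnum _ le_add_self le_rfl) hidem htop, fun j hj hjk => ?_⟩
    rcases Nat.lt_succ_iff_lt_or_eq.mp hjk with hjk | rfl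
    · exact R_mul_Asym_succ_of_R_mul_Asym (habs j hj hjk)
    · exact htop

end Antisymmetrizer

theorem qAntisymmetrizer_idempotent_general {A : Type*} [Ring A] [Algebra ℂ A]
    (n : ℕ) (q : ℂ) (R : ℕ → A)
    (hbraid : ∀ i : ℕ, 1 ≤ i → R i * R (i + 1) * R i = R (i + 1) * R i * R (i + 1))
    (hfar : ∀ i j : ℕ, 1 ≤ i → i + 2 ≤ j → R i * R j = R j * R i)
    (hhecke : ∀ i : ℕ, 1 ≤ i → (R i - q • (1 : A)) * (R i + q⁻¹ • (1 : A)) = 0)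
    (hqnum : ∀ i : ℕ, 2 ≤ i → i ≤ n → qnum q i ≠ 0) :
    ∀ i : ℕ, i ≤ n → Asym q R i * Asym q R i = Asym q R i := by
  intro i hin
  match i with
  | 0 | 1 => exact one_mul 1
  | k + 2 =>
    have hq : q - q⁻¹ ≠ 0 := fun h => hqnum 2 le_rfl (by omega) (by rw [qnum, h, div_zero])
    refine (Asym_mul_self_and_R_mul_Asym hq hbraid hfar hhecke (k + 2) fun i hi hik => ?_).1
    rcases hi.eq_or_lt with rfl | hi
    · rw [qnum_one hq]; exact one_ne_zero
    · exact hqnum i hi (hik.trans hin)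

/-- For a Hecke-type family of braid generators with the q-numbers `i_q ≠ 0` for
`2 ≤ i ≤ n`, the q-antisymmetrizers `A^{(i)}`, `i ≤ n`, are idempotent. -/
theorem qAntisymmetrizer_idempotent {A : Type*} [Ring A] [Algebra ℂ A]
    (n : ℕ) (q : ℂ) (hq : q ≠ 0) (R : ℕ → A)
    (hbraid : ∀ i : ℕ, 1 ≤ i → R i * R (i + 1) * R i = R (i + 1) * R i * R (i + 1))
    (hfar : ∀ i j : ℕ, 1 ≤ i → i + 2 ≤ j → R i * R j = R j * R i)
    (hhecke : ∀ i : ℕ, 1 ≤ i → (R i - q • (1 : A)) * (R i + q⁻¹ • (1 : A)) = 0)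
    (hqnum : ∀ i : ℕ, 2 ≤ i → i ≤ n → qnum q i ≠ 0) :
    ∀ i : ℕ, i ≤ n → Asym q R i * Asym q R i = Asym q R i :=
  qAntisymmetrizer_idempotent_general n q R hbraid hfar hhecke hqnum
end
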